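/- Let X be a right A-Galois object. Then there exists a nonzero invariant functional ψ_X on X, i.e. a nonzero linear functional ψ_X : X → k with (ψ_X ⊗ id)(α(x)) = ψ_X(x)·1 for all x ∈ X. -/

import Mathlib

open TensorProduct

noncomputable section

variable (k : Type*) [Field k]

/-- Apply a linear functional to the second tensor factor. -/
def applySnd {M N : Type*} [AddCommGroup M] [Module k M]
    [AddCommGroup N] [Module k N] (f : N →ₗ[k] k) : M ⊗[k] N →ₗ[k] M :=
  (TensorProduct.rid k M).toLinearMap ∘ₗ LinearMap.lTensor M f

/-- Apply a linear functional to the first tensor factor. -/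
def applyFst {M N : Type*} [AddCommGroup M] [Module k M]
    [AddCommGroup N] [Module k N] (f : M →ₗ[k] k) : M ⊗[k] N →ₗ[k] N :=
  (TensorProduct.lid k N).toLinearMap ∘ₗ LinearMap.rTensor N f

variable (A X : Type*) [Ring A] [HopfAlgebra k A] [Ring X] [Algebra k X]

/-- The Galois map `V : X ⊗ X → X ⊗ A`, `x ⊗ y ↦ (x ⊗ 1) * α y`. -/
def galoisV (α : X →ₐ[k] X ⊗[k] A) : X ⊗[k] X →ₗ[k] X ⊗[k] A :=
  LinearMap.mul' k (X ⊗[k] A) ∘ₗ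
    TensorProduct.map ((TensorProduct.mk k X A).flip 1) α.toLinearMap

/-- A Hopf algebra with bijective antipode and faithful left integral `φ`,
together with a right Galois coaction `α` on `X` with trivial coinvariants. -/
structure GaloisContext where
  φ : A →ₗ[k] k
  φ_ne : φ ≠ 0
  φ_integral : ∀ a : A, applySnd k φ (Coalgebra.comul a) = φ a • (1 : A)
  φ_faithful_left : ∀ a : A, (∀ b : A, φ (a * b) = 0) → a = 0
  φ_faithful_right : ∀ a : A, (∀ b : A, φ (b * a) = 0) → a = 0
  antipode_bijective : Function.Bijective (HopfAlgebra.antipode (R := k) (A := A))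
  α : X →ₐ[k] X ⊗[k] A
  coassoc : ∀ x : X,
    TensorProduct.assoc k X A A ((LinearMap.rTensor A α.toLinearMap) (α x))
      = LinearMap.lTensor X (Coalgebra.comul (R := k) (A := A)) (α x)
  counit_id : ∀ x : X,
    applySnd k (Coalgebra.counit (R := k) (A := A)) (α x) = x
  coinv_trivial : ∀ x : X, α x = x ⊗ₜ[k] (1 : A) → ∃ c : k, x = c • (1 : X)
  galois : Function.Bijective (galoisV k A X α)

variable {k A X}

/-- The Galois map as a linear equivalence. -/
def GaloisContext.V (G : GaloisContext k A X) : (X ⊗[k] X) ≃ₗ[k] (X ⊗[k] A) :=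
  LinearEquiv.ofBijective (galoisV k A X G.α) G.galois

/-- The map `β : A → X ⊗ X`, `a ↦ V⁻¹(1 ⊗ a)`. -/
def GaloisContext.β (G : GaloisContext k A X) : A →ₗ[k] X ⊗[k] X :=
  G.V.symm.toLinearMap ∘ₗ TensorProduct.mk k X A 1

end

/-!
Since the antipode `S` is bijective and anti-comultiplicative, `ρ = φ ∘ S` is a nonzero right
integral. For any functional `f` on `X`, coassociativity of `α` and right invariance of `ρ` make
`ψ = f ∘ (id ⊗ ρ) ∘ α` invariant. It remains to see that `(id ⊗ ρ) ∘ α ≠ 0`, so that some `f`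
gives `ψ ≠ 0`: since `(id ⊗ ρ)((x ⊗ 1) α(y)) = x (id ⊗ ρ)(α y)` and the Galois map is
surjective, `(id ⊗ ρ) ∘ α = 0` would force `ρ = 0`.
-/

open WithConv Coalgebra HopfAlgebra

section Convolution

variable {R A : Type*} [CommSemiring R] [Semiring A]

local notation "ιL" =>
  AlgHom.toLinearMap (Algebra.TensorProduct.includeLeft (R := R) (S := R) (A := A) (B := A))
local notation "ιR" =>
  AlgHom.toLinearMap (Algebra.TensorProduct.includeRight (R := R) (A := A) (B := A))

lemma toConv_comul_eq_includeLeft_mul_includeRight [Bialgebra R A] :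
    toConv (comul (R := R) (A := A)) = toConv ιL * toConv ιR := by
  ext a
  simp [(ℛ R a).convMul_apply, ← (ℛ R a).eq]

variable [HopfAlgebra R A]

lemma toConv_algHom_comp_antipode_mul {B : Type*} [Semiring B] [Algebra R B] (h : A →ₐ[R] B) :
    toConv (h.toLinearMap ∘ₗ antipode R) * toConv h.toLinearMap = 1 := by
  apply WithConv.ofConv_injective
  refine (LinearMap.algHom_comp_convMul_distrib h (toConv (antipode R)) (toConv .id)).symm.trans ?_
  rw [LinearMap.antipode_mul_id]
  ext a
  simp

lemma toConv_map_antipode_comm_comul :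
    toConv (map (antipode R) (antipode R) ∘ₗ (TensorProduct.comm R A A).toLinearMap ∘ₗ comul) =
      toConv (ιR ∘ₗ antipode R) * toConv (ιL ∘ₗ antipode R) := by
  ext a
  simp [(ℛ R a).convMul_apply, ← (ℛ R a).eq]

/-- Since `Δ = ιL * ιR` in the convolution algebra, the right-hand side `(ιR ∘ S) * (ιL ∘ S)` is a
left inverse of `Δ`, while `Δ ∘ S` is a right inverse of `Δ`. -/
theorem HopfAlgebra.comul_comp_antipode :
    comul ∘ₗ antipode R =
      map (antipode R) (antipode R) ∘ₗ (TensorProduct.comm R A A).toLinearMap ∘ₗ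
        comul (A := A) := by
  have hleft : toConv (map (antipode R) (antipode R) ∘ₗ (TensorProduct.comm R A A).toLinearMap ∘ₗ
      comul) * toConv (comul (R := R) (A := A)) = 1 := by
    rw [toConv_map_antipode_comm_comul, toConv_comul_eq_includeLeft_mul_includeRight, mul_assoc,
      ← mul_assoc (toConv (ιL ∘ₗ antipode R)), toConv_algHom_comp_antipode_mul, one_mul,
      toConv_algHom_comp_antipode_mul]
  exact congrArg ofConv (left_inv_eq_right_inv hleft LinearMap.comul_right_inv).symm

end Convolution

section Functionals

variable {k : Type*} [Field k] {M N P : Type*} [AddCommGroup M] [Module k M]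
  [AddCommGroup N] [Module k N] [AddCommGroup P] [Module k P]

@[simp]
lemma applySnd_tmul (f : N →ₗ[k] k) (m : M) (n : N) : applySnd k f (m ⊗ₜ[k] n) = f n • m := by
  simp [applySnd]

@[simp]
lemma applyFst_tmul (f : M →ₗ[k] k) (m : M) (n : N) : applyFst k f (m ⊗ₜ[k] n) = f m • n := by
  simp [applyFst]

lemma applyFst_comp (g : M →ₗ[k] k) (h : P →ₗ[k] M) :
    applyFst (N := N) k (g ∘ₗ h) = applyFst k g ∘ₗ h.rTensor N := by
  ext x y
  simp

lemma applyFst_comp_applySnd (f : M →ₗ[k] k) (g : N →ₗ[k] k) :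
    applyFst (N := P) k (f ∘ₗ applySnd k g) =
      applyFst k f ∘ₗ (applyFst k g).lTensor M ∘ₗ (TensorProduct.assoc k M N P).toLinearMap := by
  ext x y z
  simp [smul_smul, mul_comm]

end Functionals

section Integrals

variable {k A : Type*} [Field k] [Ring A]

def IsLeftIntegral [Bialgebra k A] (φ : A →ₗ[k] k) : Prop :=
  ∀ a : A, applySnd k φ (comul a) = φ a • (1 : A)

def IsRightIntegral [Bialgebra k A] (ρ : A →ₗ[k] k) : Prop :=
  ∀ a : A, applyFst k ρ (comul a) = ρ a • (1 : A)

lemma IsRightIntegral.lTensor_applyFst_comul [Bialgebra k A] {ρ : A →ₗ[k] k}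
    (hρ : IsRightIntegral ρ) {M : Type*} [AddCommGroup M] [Module k M] (t : M ⊗[k] A) :
    (applyFst k ρ).lTensor M (comul.lTensor M t) = applySnd k ρ t ⊗ₜ[k] (1 : A) := by
  induction t with
  | zero => simp
  | tmul m a => simp [hρ a, smul_tmul]
  | add s t hs ht => simp [hs, ht, add_tmul]

lemma IsLeftIntegral.comp_antipode [HopfAlgebra k A] {φ : A →ₗ[k] k} (hφ : IsLeftIntegral φ)
    (hS : Function.Injective (antipode k (A := A))) : IsRightIntegral (φ ∘ₗ antipode k) := by
  intro a
  apply hS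
  have hS_applyFst : antipode k ∘ₗ applyFst k (φ ∘ₗ antipode k) =
      applySnd k φ ∘ₗ map (antipode k) (antipode k) ∘ₗ (TensorProduct.comm k A A).toLinearMap := by
    ext x y
    simp
  calc antipode k (applyFst k (φ ∘ₗ antipode k) (comul a))
      = applySnd k φ (comul (antipode k a)) := by
        rw [← LinearMap.comp_apply (antipode k), hS_applyFst, ← LinearMap.comp_apply comul,
          comul_comp_antipode]
        rfl
    _ = antipode k ((φ ∘ₗ antipode k) a • (1 : A)) := by
        rw [hφ, map_smul, antipode_one, LinearMap.comp_apply]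

end Integrals

section Coaction

variable {k A X : Type*} [Field k] [Ring A] [Bialgebra k A] [AddCommGroup X] [Module k X]

lemma IsRightIntegral.applyFst_comp_applySnd_comp_coaction {ρ : A →ₗ[k] k}
    (hρ : IsRightIntegral ρ) {α : X →ₗ[k] X ⊗[k] A}
    (hα : ∀ x : X, TensorProduct.assoc k X A A (α.rTensor A (α x)) = comul.lTensor X (α x))
    (f : X →ₗ[k] k) (x : X) :
    applyFst k (f ∘ₗ applySnd k ρ ∘ₗ α) (α x) = f (applySnd k ρ (α x)) • (1 : A) := by
  rw [← LinearMap.comp_assoc, applyFst_comp, LinearMap.comp_apply, applyFst_comp_applySnd]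
  simp only [LinearMap.comp_apply, LinearEquiv.coe_coe, hα, hρ.lTensor_applyFst_comul,
    applyFst_tmul]

end Coaction

section Galois

variable {k A X : Type*} [Field k] [Ring A] [Ring X] [Algebra k X]

lemma applySnd_tmul_one_mul [Algebra k A] (ρ : A →ₗ[k] k) (x : X) (t : X ⊗[k] A) :
    applySnd k ρ ((x ⊗ₜ[k] (1 : A)) * t) = x * applySnd k ρ t := by
  induction t with
  | zero => simp
  | tmul y a => simp
  | add s t hs ht => simp [mul_add, hs, ht]

variable [HopfAlgebra k A]

lemma applySnd_galoisV_tmul (α : X →ₐ[k] X ⊗[k] A) (ρ : A →ₗ[k] k) (x y : X) :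
    applySnd k ρ (galoisV k A X α (x ⊗ₜ[k] y)) = x * applySnd k ρ (α y) := by
  simp [galoisV, applySnd_tmul_one_mul]

lemma exists_applySnd_coaction_ne_zero [Nontrivial X] {α : X →ₐ[k] X ⊗[k] A}
    (hV : Function.Surjective (galoisV k A X α)) {ρ : A →ₗ[k] k} (hρ : ρ ≠ 0) :
    ∃ x : X, applySnd k ρ (α x) ≠ 0 := by
  by_contra! h
  have hzero : applySnd k ρ ∘ₗ galoisV k A X α = 0 :=
    TensorProduct.ext' fun x y => by simp [applySnd_galoisV_tmul, h]
  refine hρ (LinearMap.ext fun a => ?_)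
  obtain ⟨t, ht⟩ := hV (1 ⊗ₜ[k] a)
  have : ρ a • (1 : X) = 0 := by
    rw [← applySnd_tmul, ← ht]
    exact LinearMap.congr_fun hzero t
  exact (smul_eq_zero.mp this).resolve_right one_ne_zero

end Galois

theorem galois_object_exists_invariant_functional
    {k : Type*} [Field k] {A X : Type*} [Ring A] [HopfAlgebra k A]
    [Ring X] [Algebra k X] [Nontrivial X]
    (G : GaloisContext k A X) :
    ∃ ψX : X →ₗ[k] k, ψX ≠ 0 ∧
      ∀ x : X, applyFst k ψX (G.α x) = ψX x • (1 : A) := by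
  obtain ⟨hS_inj, hS_surj⟩ := G.antipode_bijective
  set ρ := G.φ ∘ₗ antipode k
  have hρ : IsRightIntegral ρ := IsLeftIntegral.comp_antipode G.φ_integral hS_inj
  have hρ_ne : ρ ≠ 0 := fun h =>
    G.φ_ne ((LinearMap.cancel_right hS_surj).1 (h.trans (LinearMap.zero_comp _).symm))
  obtain ⟨x₀, hx₀⟩ := exists_applySnd_coaction_ne_zero G.galois.2 hρ_ne
  obtain ⟨f, hf⟩ := Module.Projective.exists_dual_ne_zero k hx₀
  exact ⟨f ∘ₗ applySnd k ρ ∘ₗ G.α.toLinearMap, fun h => hf (LinearMap.congr_fun h x₀),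
    hρ.applyFst_comp_applySnd_comp_coaction G.coassoc f⟩
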